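/- arXiv:2104.10205 — 11 statements merged into one kernel-verified Lean document; each statement's English description precedes it below -/
import Mathlib

section
/- A social choice function φ is group strategy-proof if and only if it satisfies the almost preference reversal property. -/
/-- A weak ordering on the set `A` of alternatives: a reflexive, transitive
and total relation. -/
def IsWeakOrdering {A : Type*} (R : A → A → Prop) : Prop :=
  Reflexive R ∧ Transitive R ∧ ∀ x y : A, R x y ∨ R y x

/-- `x ≻ y`: `x ≿ y` and not `y ≿ x`. -/
def StrictPref {A : Type*} (R : A → A → Prop) (x y : A) : Prop :=
  R x y ∧ ¬ R y x

/-- Individual strategy-proofness: for every profile `P`, voter `v` and feasible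
deviation (a profile `Q` agreeing with `P` off `v`), it is not the case that
`φ Q ≻_{P v} φ P`. -/
def ISP {A V : Type*} (W : V → Set (A → A → Prop)) (φ : (∀ v : V, W v) → A) : Prop :=
  ∀ P Q : ∀ v : V, W v, ∀ v : V, (∀ w : V, w ≠ v → P w = Q w) →
    ¬ StrictPref (P v).1 (φ Q) (φ P)

/-- Group strategy-proofness: there are no nonempty coalition `D`, true profile `P`
and manipulated profile `Q` (agreeing with `P` off `D`) such that every member of
`D` strictly prefers `φ Q` to `φ P` according to its true preference. -/
def GSP {A V : Type*} (W : V → Set (A → A → Prop)) (φ : (∀ v : V, W v) → A) : Prop :=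
  ¬ ∃ (D : Set V) (P Q : ∀ v : V, W v), D.Nonempty ∧ (∀ v ∉ D, P v = Q v) ∧
      ∀ v ∈ D, StrictPref (P v).1 (φ Q) (φ P)

/-- The Preference Reversal property. -/
def PrefReversal {A V : Type*} (W : V → Set (A → A → Prop)) (φ : (∀ v : V, W v) → A) : Prop :=
  ∀ P Q : ∀ v : V, W v, φ P ≠ φ Q →
    ∃ v : V, (P v).1 (φ P) (φ Q) ∧ (Q v).1 (φ Q) (φ P) ∧ P v ≠ Q v

/-- The Almost Preference Reversal property. -/
def AlmostPrefReversal {A V : Type*} (W : V → Set (A → A → Prop))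
    (φ : (∀ v : V, W v) → A) : Prop :=
  ∀ P Q : ∀ v : V, W v, φ P ≠ φ Q →
    (∃ v : V, (P v).1 (φ P) (φ Q) ∧ P v ≠ Q v) ∧
    (∃ w : V, (Q w).1 (φ Q) (φ P) ∧ P w ≠ Q w)

/-- `W` resolves the `P`-indifference at `a`. -/
def Resolves {A : Type*} (W P : A → A → Prop) (a : A) : Prop :=
  ∀ x : A, x ≠ a → P a x → StrictPref W a x

/-- `W` is an `(a,b)`-resolvent of `(P, Q)`. -/
def IsResolvent {A : Type*} (W : A → A → Prop) (a b : A) (P Q : A → A → Prop) : Prop :=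
  Resolves W P a ∧ Resolves W Q b

/-- A complete set of preferences. -/
def CompleteSet {A : Type*} (O : Set (A → A → Prop)) : Prop :=
  ∀ P ∈ O, ∀ Q ∈ O, ∀ a b : A, a ≠ b → ¬ (P a b ∧ Q b a) →
    ∃ W ∈ O, IsResolvent W a b P Q

/-- A social choice function `φ` is group strategy-proof if and only if
it satisfies the almost preference reversal property. -/
theorem gsp_iff_almostPrefReversal {A V : Type*} (W : V → Set (A → A → Prop))
    (hne : ∀ v : V, (W v).Nonempty)
    (hwo : ∀ v : V, ∀ R ∈ W v, IsWeakOrdering R)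
    (φ : (∀ v : V, W v) → A) :
    GSP W φ ↔ AlmostPrefReversal W φ := by
  constructor
  · intro hgsp P Q hne'
    constructor
    · by_contra hcon
      push_neg at hcon
      apply hgsp
      refine ⟨{v | P v ≠ Q v}, P, Q, ?_, ?_, ?_⟩
      · by_contra hD
        rw [Set.not_nonempty_iff_eq_empty] at hD
        apply hne'
        congr 1
        funext v
        by_contra hv
        exact absurd (Set.eq_empty_iff_forall_notMem.mp hD v) (not_not.mpr hv)
      · intro v hv
        exact not_not.mp hv
      · intro v hv
        have hne2 : P v ≠ Q v := hv
        have hnot : ¬ (P v).1 (φ P) (φ Q) := fun h => hne2 (hcon v h)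
        have htot := (hwo v (P v).1 (P v).2).2.2 (φ P) (φ Q)
        exact ⟨htot.resolve_left hnot, hnot⟩
    · by_contra hcon
      push_neg at hcon
      apply hgsp
      refine ⟨{v | P v ≠ Q v}, Q, P, ?_, ?_, ?_⟩
      · by_contra hD
        rw [Set.not_nonempty_iff_eq_empty] at hD
        apply hne'
        congr 1
        funext v
        by_contra hv
        exact absurd (Set.eq_empty_iff_forall_notMem.mp hD v) (not_not.mpr hv)
      · intro v hv
        exact (not_not.mp hv).symm
      · intro v hv
        have hne2 : P v ≠ Q v := hv
        have hnot : ¬ (Q v).1 (φ Q) (φ P) := fun h => hne2 (hcon v h)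
        have htot := (hwo v (Q v).1 (Q v).2).2.2 (φ Q) (φ P)
        exact ⟨htot.resolve_left hnot, hnot⟩
  · rintro hapr ⟨D, P, Q, ⟨v0, hv0⟩, hoff, hstrict⟩
    have hne' : φ P ≠ φ Q := by
      intro h
      have := hstrict v0 hv0
      rw [h] at this
      exact this.2 this.1
    obtain ⟨⟨v, hPv, hvne⟩, _⟩ := hapr P Q hne'
    have hvD : v ∈ D := by
      by_contra hvD
      exact hvne (hoff v hvD)
    exact (hstrict v hvD).2 hPv
end

section
/- If a social choice function φ satisfies the preference reversal property, then φ is group strategy-proof. -/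
/-- Preference reversal implies group strategy-proofness. -/
theorem prefReversal_implies_gsp {A V : Type*}
    (W : V → Set (A → A → Prop))
    (hne : ∀ v : V, (W v).Nonempty)
    (hwo : ∀ v : V, ∀ R ∈ W v, IsWeakOrdering R)
    (φ : (∀ v : V, W v) → A) (hPR : PrefReversal W φ) :
    GSP W φ := by
  rintro ⟨D, P, Q, ⟨v0, hv0⟩, hoff, hman⟩
  have hne' : φ P ≠ φ Q := by
    intro h
    have := hman v0 hv0
    rw [h] at this
    exact this.2 this.1
  obtain ⟨v, h1, h2, h3⟩ := hPR P Q hne'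
  have hvD : v ∈ D := by
    by_contra hv
    exact h3 (hoff v hv)
  exact (hman v hvD).2 h1
end

section
/- Let φ be a social choice function. If the set of voters V is finite and the range of φ has cardinality at most 3, then: φ individually strategy-proof implies that φ is group strategy-proof. -/
private lemma pick_third {A : Type*} {x y z a b c d : A}
    (ha : a = x ∨ a = y ∨ a = z) (hb : b = x ∨ b = y ∨ b = z)
    (hc : c = x ∨ c = y ∨ c = z) (hd : d = x ∨ d = y ∨ d = z)
    (hab : a ≠ b) (hca : c ≠ a) (hcb : c ≠ b) (hda : d ≠ a) (hdb : d ≠ b) :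
    c = d := by
  rcases ha with rfl|rfl|rfl <;> rcases hb with rfl|rfl|rfl <;>
    rcases hc with rfl|rfl|rfl <;> rcases hd with rfl|rfl|rfl <;> tauto

private lemma key_lemma {A V : Type*}
    (W : V → Set (A → A → Prop))
    (hwo : ∀ v : V, ∀ R ∈ W v, IsWeakOrdering R)
    (φ : (∀ v : V, W v) → A)
    (hrange : ∃ x y z : A, ∀ P : ∀ v : V, W v, φ P = x ∨ φ P = y ∨ φ P = z)
    (hISP : ISP W φ) :
    ∀ n : ℕ, ∀ (D : Finset V) (P Q : ∀ v : V, W v),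
      D.card ≤ n → (∀ v, v ∉ D → P v = Q v) →
      (∀ v ∈ D, StrictPref (P v).1 (φ Q) (φ P)) → φ P = φ Q := by
  classical
  intro n
  induction n with
  | zero =>
    intro D P Q hcard hoff _
    have hD : D = ∅ := Finset.card_eq_zero.mp (Nat.le_zero.mp hcard)
    subst hD
    have : P = Q := funext fun v => hoff v (by simp)
    rw [this]
  | succ n ih =>
    intro D P Q hcard hoff hstr
    by_cases hD : D = ∅
    · subst hD
      have : P = Q := funext fun v => hoff v (by simp)
      rw [this]
    obtain ⟨v, hv⟩ := Finset.nonempty_iff_ne_empty.mpr hD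
    by_contra hab
    -- notation
    have hISPw : ∀ w ∈ D, ¬ StrictPref (P w).1 (φ (Function.update P w (Q w))) (φ P) := by
      intro w _
      exact hISP P _ w (fun u hu => (Function.update_of_ne hu _ _).symm)
    -- reduction step: if everyone in D.erase w strictly prefers φ Q to the
    -- one-step outcome, then the one-step outcome equals φ Q.
    have hred : ∀ w ∈ D,
        (∀ u ∈ D.erase w, StrictPref (P u).1 (φ Q) (φ (Function.update P w (Q w)))) →
        φ (Function.update P w (Q w)) = φ Q := by
      intro w hw hall
      refine ih (D.erase w) (Function.update P w (Q w)) Q ?_ ?_ ?_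
      · have := Finset.card_erase_of_mem hw
        omega
      · intro u hu
        by_cases huw : u = w
        · subst huw; simp
        · rw [Function.update_of_ne huw]
          exact hoff u (by simp_all)
      · intro u hu
        have huw : u ≠ w := Finset.ne_of_mem_erase hu
        have : Function.update P w (Q w) u = P u := Function.update_of_ne huw _ _
        rw [this]
        exact hall u hu
    by_cases hcaseb : ∃ w ∈ D, φ (Function.update P w (Q w)) = φ Q
    · obtain ⟨w, hw, heq⟩ := hcaseb
      exact hISPw w hw (heq ▸ hstr w hw)
    by_cases hcasea : ∃ w ∈ D, φ (Function.update P w (Q w)) = φ P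
    · obtain ⟨w, hw, heq⟩ := hcasea
      refine hab ?_
      have := hred w hw (fun u hu => heq ▸ hstr u (Finset.mem_of_mem_erase hu))
      rw [← this, heq]
    push_neg at hcaseb hcasea
    -- all one-step outcomes avoid φ P and φ Q, hence equal the third alternative
    obtain ⟨x, y, z, hxyz⟩ := hrange
    have hcc : ∀ w ∈ D, φ (Function.update P w (Q w)) = φ (Function.update P v (Q v)) := by
      intro w hw
      exact pick_third (hxyz P) (hxyz Q) (hxyz _) (hxyz _) hab
        (hcasea w hw) (hcaseb w hw) (hcasea v hv) (hcaseb v hv)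
    -- everyone in D strictly prefers φ Q to the third alternative
    have hQc : ∀ w ∈ D, StrictPref (P w).1 (φ Q) (φ (Function.update P v (Q v))) := by
      intro w hw
      obtain ⟨hrefl, htrans, htotal⟩ := hwo w _ (P w).2
      have hst := hstr w hw
      have hnis := hISPw w hw
      rw [hcc w hw] at hnis
      -- from ¬ strict and totality: R (φ P) c
      have hac : (P w).1 (φ P) (φ (Function.update P v (Q v))) := by
        rcases htotal (φ P) (φ (Function.update P v (Q v))) with h | h
        · exact h
        · by_contra hn
          exact hnis ⟨h, hn⟩
      refine ⟨htrans hst.1 hac, fun h => hst.2 (htrans hac h)⟩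
    -- reduce
    have := hred v hv (fun u hu => hQc u (Finset.mem_of_mem_erase hu))
    have hcb : φ (Function.update P v (Q v)) ≠ φ Q := hcaseb v hv
    exact hcb this

/-- If `V` is finite and the range of `φ` has cardinality at most 3,
then individual strategy-proofness implies group strategy-proofness. -/
theorem isp_implies_gsp_of_range_le_three {A V : Type*} [Finite V]
    (W : V → Set (A → A → Prop))
    (hne : ∀ v : V, (W v).Nonempty)
    (hwo : ∀ v : V, ∀ R ∈ W v, IsWeakOrdering R)
    (φ : (∀ v : V, W v) → A)
    (hrange : ∃ x y z : A, ∀ P : ∀ v : V, W v, φ P = x ∨ φ P = y ∨ φ P = z)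
    (hISP : ISP W φ) :
    GSP W φ := by
  rintro ⟨D, P, Q, hDne, hoff, hstr⟩
  classical
  have hDf : D.Finite := Set.toFinite D
  have hkey := key_lemma W hwo φ hrange hISP hDf.toFinset.card hDf.toFinset P Q le_rfl
    (fun v hv => hoff v (by simpa using hv))
    (fun v hv => hstr v (by simpa using hv))
  obtain ⟨v, hv⟩ := hDne
  have h := hstr v hv
  rw [hkey] at h
  exact h.2 h.1
end

section
/- The set of all strict orderings on A is a complete set of preferences. -/
/-- Auxiliary: a modified order placing `a` first, `b` second, rest by `P`. -/
def TopTwo {A : Type*} (P : A → A → Prop) (a b : A) : A → A → Prop :=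
  fun x y => x = y ∨ (x = a ∧ y ≠ a) ∨ (x = b ∧ y ≠ a ∧ y ≠ b) ∨
    (x ≠ a ∧ x ≠ b ∧ y ≠ a ∧ y ≠ b ∧ P x y)

lemma topTwo_strict {A : Type*} {P : A → A → Prop}
    (hP : IsWeakOrdering P) (hPa : AntiSymmetric P) (a b : A) :
    IsWeakOrdering (TopTwo P a b) ∧ AntiSymmetric (TopTwo P a b) := by
  obtain ⟨hr, ht, htot⟩ := hP
  refine ⟨⟨fun x => Or.inl rfl, ?_, ?_⟩, ?_⟩
  · -- transitivity
    rintro x y z (rfl | ⟨rfl, hy⟩ | ⟨rfl, hy1, hy2⟩ | ⟨hx1, hx2, hy1, hy2, hxy⟩) hyz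
    · exact hyz
    · rcases hyz with rfl | ⟨rfl, hz⟩ | ⟨rfl, hz1, hz2⟩ | ⟨hy1', hy2', hz1, hz2, hyz'⟩
      · exact Or.inr (Or.inl ⟨rfl, hy⟩)
      · exact absurd rfl hy
      · exact Or.inr (Or.inl ⟨rfl, hz1⟩)
      · exact Or.inr (Or.inl ⟨rfl, hz1⟩)
    · rcases hyz with rfl | ⟨rfl, hz⟩ | ⟨rfl, hz1, hz2⟩ | ⟨hy1', hy2', hz1, hz2, hyz'⟩
      · exact Or.inr (Or.inr (Or.inl ⟨rfl, hy1, hy2⟩))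
      · exact absurd rfl hy1
      · exact absurd rfl hy2
      · exact Or.inr (Or.inr (Or.inl ⟨rfl, hz1, hz2⟩))
    · rcases hyz with rfl | ⟨rfl, hz⟩ | ⟨rfl, hz1, hz2⟩ | ⟨hy1', hy2', hz1, hz2, hyz'⟩
      · exact Or.inr (Or.inr (Or.inr ⟨hx1, hx2, hy1, hy2, hxy⟩))
      · exact absurd rfl hy1
      · exact absurd rfl hy2
      · exact Or.inr (Or.inr (Or.inr ⟨hx1, hx2, hz1, hz2, ht hxy hyz'⟩))
  · -- totality
    intro x y
    by_cases hxy : x = y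
    · exact Or.inl (Or.inl hxy)
    by_cases hx : x = a
    · exact Or.inl (Or.inr (Or.inl ⟨hx, fun h => hxy (hx.trans h.symm)⟩))
    by_cases hy : y = a
    · exact Or.inr (Or.inr (Or.inl ⟨hy, hx⟩))
    by_cases hx' : x = b
    · exact Or.inl (Or.inr (Or.inr (Or.inl ⟨hx', hy, fun h => hxy (hx'.trans h.symm)⟩)))
    by_cases hy' : y = b
    · exact Or.inr (Or.inr (Or.inr (Or.inl ⟨hy', hx, hx'⟩)))
    rcases htot x y with h | h
    · exact Or.inl (Or.inr (Or.inr (Or.inr ⟨hx, hx', hy, hy', h⟩)))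
    · exact Or.inr (Or.inr (Or.inr (Or.inr ⟨hy, hy', hx, hx', h⟩)))
  · -- antisymmetry
    rintro x y (rfl | ⟨rfl, hy⟩ | ⟨rfl, hy1, hy2⟩ | ⟨hx1, hx2, hy1, hy2, hxy⟩) hyx
    · rfl
    · rcases hyx with rfl | ⟨rfl, _⟩ | ⟨_, h, _⟩ | ⟨_, _, h, _⟩
      · rfl
      · exact absurd rfl hy
      · exact absurd rfl h
      · exact absurd rfl h
    · rcases hyx with rfl | ⟨rfl, _⟩ | ⟨rfl, _⟩ | ⟨_, _, _, h, _⟩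
      · rfl
      · exact absurd rfl hy1
      · exact absurd rfl hy2
      · exact absurd rfl h
    · rcases hyx with rfl | ⟨rfl, _⟩ | ⟨rfl, _⟩ | ⟨_, _, _, _, hyx'⟩
      · rfl
      · exact absurd rfl hy1
      · exact absurd rfl hy2
      · exact hPa hxy hyx'

lemma topTwo_first {A : Type*} (P : A → A → Prop) (a b : A) {x : A} (hx : x ≠ a) :
    StrictPref (TopTwo P a b) a x := by
  refine ⟨Or.inr (Or.inl ⟨rfl, hx⟩), ?_⟩
  rintro (rfl | ⟨rfl, _⟩ | ⟨_, h, _⟩ | ⟨_, _, h, _⟩)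
  · exact hx rfl
  · exact hx rfl
  · exact h rfl
  · exact h rfl

lemma topTwo_second {A : Type*} (P : A → A → Prop) (a b : A) {x : A}
    (hxa : x ≠ a) (hxb : x ≠ b) : StrictPref (TopTwo P a b) b x := by
  refine ⟨Or.inr (Or.inr (Or.inl ⟨rfl, hxa, hxb⟩)), ?_⟩
  rintro (rfl | ⟨rfl, _⟩ | ⟨rfl, _⟩ | ⟨_, _, _, h, _⟩)
  · exact hxb rfl
  · exact hxa rfl
  · exact hxb rfl
  · exact h rfl

/-- The set of all strict orderings (antisymmetric weak orderings)
on `A` is a complete set of preferences. -/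
theorem completeSet_of_all_strict_orderings (A : Type*) :
    CompleteSet {R : A → A → Prop | IsWeakOrdering R ∧ AntiSymmetric R} := by
  rintro P ⟨hPw, hPa⟩ Q ⟨hQw, hQa⟩ a b hab hnot
  rcases not_and_or.mp hnot with hP | hQ
  · -- ¬ P a b : put b first, a second (using Q as tail)
    refine ⟨TopTwo Q b a, topTwo_strict hQw hQa b a, ?_, ?_⟩
    · intro x hx hPax
      rcases eq_or_ne x b with rfl | hxb
      · exact absurd hPax hP
      · exact topTwo_second Q b a hxb hx
    · intro x hx _
      exact topTwo_first Q b a hx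
  · -- ¬ Q b a : put a first, b second (using P as tail)
    refine ⟨TopTwo P a b, topTwo_strict hPw hPa a b, ?_, ?_⟩
    · intro x hx _
      exact topTwo_first P a b hx
    · intro x hx hQbx
      rcases eq_or_ne x a with rfl | hxa
      · exact absurd hQbx hQ
      · exact topTwo_second P a b hxa hx
end

section
/- Let A = {1, 2, …, k} with its natural linear order. The set of all single-peaked weak orderings on A is a complete set of preferences. -/
/-- A weak ordering on the linearly ordered set `Fin k` (representing
`{1, 2, …, k}` with its natural order) is single-peaked if it has a peak `p`
such that `y ≻ x` whenever `x < y ≤ p`, and `y ≻ x` whenever `p ≤ y < x`. -/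
def SinglePeaked {k : ℕ} (W : Fin k → Fin k → Prop) : Prop :=
  IsWeakOrdering W ∧ ∃ p : Fin k,
    (∀ x y : Fin k, x < y → y ≤ p → StrictPref W y x) ∧
    (∀ x y : Fin k, p ≤ y → y < x → StrictPref W y x)
/-- Auxiliary: a utility function `f : Fin k → ℤ` induces a single-peaked
weak ordering provided `f` strictly increases up to `q` and strictly
decreases after `q`. -/
lemma singlePeaked_of_utility {k : ℕ} (f : Fin k → ℤ) (q : Fin k)
    (h1 : ∀ x y : Fin k, x < y → y ≤ q → f x < f y)
    (h2 : ∀ x y : Fin k, q ≤ y → y < x → f x < f y) :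
    SinglePeaked (fun x y => f y ≤ f x) := by
  refine ⟨⟨fun x => le_refl _, fun x y z hxy hyz => le_trans hyz hxy,
    fun x y => le_total (f y) (f x)⟩, q, ?_, ?_⟩
  · intro x y hxy hyq
    exact ⟨(h1 x y hxy hyq).le, not_le.mpr (h1 x y hxy hyq)⟩
  · intro x y hqy hyx
    exact ⟨(h2 x y hqy hyx).le, not_le.mpr (h2 x y hqy hyx)⟩

/-- Auxiliary key lemma: if `P` is single-peaked, `a ≠ b` and `¬ P a b`, then
there is a single-peaked `W` whose unique top is `b` and which resolves the
`P`-indifference at `a`. -/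
lemma key_resolvent {k : ℕ} (P : Fin k → Fin k → Prop) (hP : SinglePeaked P)
    (a b : Fin k) (hab : a ≠ b) (h : ¬ P a b) :
    ∃ W : Fin k → Fin k → Prop, SinglePeaked W ∧
      (∀ x : Fin k, x ≠ b → StrictPref W b x) ∧ Resolves W P a := by
  obtain ⟨⟨hrefl, htrans, htot⟩, p, hp1, hp2⟩ := hP
  have hba : StrictPref P b a := ⟨(htot a b).resolve_left h, h⟩
  rcases lt_or_gt_of_ne hab with hlt | hlt
  · -- case a < b : peak at b, f x = x for x ≤ b, f x = a - x for x > b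
    have hmid : ∀ x : Fin k, a < x → x ≤ b → StrictPref P x a := by
      intro x hax hxb
      rcases le_or_gt x p with hxp | hpx
      · exact hp1 a x hax hxp
      · rcases eq_or_lt_of_le hxb with rfl | hxb'
        · exact hba
        · have h1 : StrictPref P x b := hp2 b x hpx.le hxb'
          exact ⟨htrans h1.1 hba.1, fun hax' => h (htrans hax' h1.1)⟩
    set f : Fin k → ℤ := fun x =>
      if (x : ℕ) ≤ (b : ℕ) then ((x : ℕ) : ℤ) else ((a : ℕ) : ℤ) - (x : ℕ) with hf
    have hab' : (a : ℕ) < (b : ℕ) := hlt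
    have hmono1 : ∀ x y : Fin k, x < y → y ≤ b → f x < f y := by
      intro x y hxy hyb
      have h1 : (x : ℕ) < (y : ℕ) := hxy
      have h2 : (y : ℕ) ≤ (b : ℕ) := hyb
      simp only [hf]
      split_ifs with hx hy hy <;> omega
    have hmono2 : ∀ x y : Fin k, b ≤ y → y < x → f x < f y := by
      intro x y hby hyx
      have h1 : (b : ℕ) ≤ (y : ℕ) := hby
      have h2 : (y : ℕ) < (x : ℕ) := hyx
      simp only [hf]
      split_ifs with hx hy hy <;> omega
    refine ⟨fun x y => f y ≤ f x, singlePeaked_of_utility f b hmono1 hmono2, ?_, ?_⟩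
    · intro x hx
      have hx' : (x : ℕ) ≠ (b : ℕ) := fun hc => hx (Fin.ext hc)
      have : f x < f b := by
        simp only [hf]
        split_ifs with h1 h2 h2 <;> omega
      exact ⟨this.le, not_le.mpr this⟩
    · intro x hx hpax
      have hxa' : (x : ℕ) ≠ (a : ℕ) := fun hc => hx (Fin.ext hc)
      have hout : (x : ℕ) < (a : ℕ) ∨ (b : ℕ) < (x : ℕ) := by
        rcases lt_trichotomy x a with h1 | h1 | h1
        · exact Or.inl h1
        · exact absurd h1 hx
        · rcases le_or_gt x b with h2 | h2
          · exact absurd hpax (hmid x h1 h2).2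
          · exact Or.inr h2
      have : f x < f a := by
        simp only [hf]
        split_ifs with h1 h2 h2 <;> omega
      exact ⟨this.le, not_le.mpr this⟩
  · -- case b < a : peak at b, f x = -x for x ≥ b, f x = x - k - a for x < b
    have hmid : ∀ x : Fin k, b ≤ x → x < a → StrictPref P x a := by
      intro x hbx hxa
      rcases le_or_gt p x with hpx | hxp
      · exact hp2 a x hpx hxa
      · rcases eq_or_lt_of_le hbx with rfl | hbx'
        · exact hba
        · have h1 : StrictPref P x b := hp1 b x hbx' hxp.le
          exact ⟨htrans h1.1 hba.1, fun hax' => h (htrans hax' h1.1)⟩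
    set f : Fin k → ℤ := fun x =>
      if (b : ℕ) ≤ (x : ℕ) then -((x : ℕ) : ℤ)
      else ((x : ℕ) : ℤ) - (k : ℤ) - ((a : ℕ) : ℤ) with hf
    have hab' : (b : ℕ) < (a : ℕ) := hlt
    have hak : (a : ℕ) < k := a.isLt
    have hmono1 : ∀ x y : Fin k, x < y → y ≤ b → f x < f y := by
      intro x y hxy hyb
      have h1 : (x : ℕ) < (y : ℕ) := hxy
      have h2 : (y : ℕ) ≤ (b : ℕ) := hyb
      have h3 : (x : ℕ) < k := x.isLt
      simp only [hf]
      split_ifs with hx hy hy <;> omega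
    have hmono2 : ∀ x y : Fin k, b ≤ y → y < x → f x < f y := by
      intro x y hby hyx
      have h1 : (b : ℕ) ≤ (y : ℕ) := hby
      have h2 : (y : ℕ) < (x : ℕ) := hyx
      have h3 : (y : ℕ) < k := y.isLt
      simp only [hf]
      split_ifs with hx hy hy <;> omega
    refine ⟨fun x y => f y ≤ f x, singlePeaked_of_utility f b hmono1 hmono2, ?_, ?_⟩
    · intro x hx
      have hx' : (x : ℕ) ≠ (b : ℕ) := fun hc => hx (Fin.ext hc)
      have hxk : (x : ℕ) < k := x.isLt
      have : f x < f b := by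
        simp only [hf]
        split_ifs with h1 h2 h2 <;> omega
      exact ⟨this.le, not_le.mpr this⟩
    · intro x hx hpax
      have hxa' : (x : ℕ) ≠ (a : ℕ) := fun hc => hx (Fin.ext hc)
      have hxk : (x : ℕ) < k := x.isLt
      have hout : (x : ℕ) < (b : ℕ) ∨ (a : ℕ) < (x : ℕ) := by
        rcases lt_trichotomy x a with h1 | h1 | h1
        · rcases le_or_gt b x with h2 | h2
          · exact absurd hpax (hmid x h2 h1).2
          · exact Or.inl h2
        · exact absurd h1 hx
        · exact Or.inr h1
      have : f x < f a := by
        simp only [hf]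
        split_ifs with h1 h2 h2 <;> omega
      exact ⟨this.le, not_le.mpr this⟩

/-- The set of all single-peaked weak orderings on `{1, …, k}`
is a complete set of preferences. -/
theorem completeSet_of_singlePeaked (k : ℕ) :
    CompleteSet {W : Fin k → Fin k → Prop | SinglePeaked W} := by
  intro P hP Q hQ a b hab h
  rcases not_and_or.mp h with h' | h'
  · obtain ⟨W, hW, hWb, hWa⟩ := key_resolvent P hP a b hab h'
    exact ⟨W, hW, hWa, fun x hxb _ => hWb x hxb⟩
  · obtain ⟨W, hW, hWa, hWb⟩ := key_resolvent Q hQ b a hab.symm h'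
    exact ⟨W, hW, fun x hxa _ => hWa x hxa, hWb⟩
end

section
/- Let φ be an individually strategy-proof social choice function, let v be a voter, let P be a profile with φ(P) = a, and let W ∈ W_v be a weak ordering that resolves the P_v-indifference at a (i.e. a ≻_W x for every x ≠ a with a ≿_{P_v} x). Then φ(W, P_{-v}) = a. -/
/-- If `φ` is ISP, `φ P = a`, and `W ∈ W_v` resolves the
`P_v`-indifference at `a`, then the profile obtained from `P` by replacing
`P_v` with `W` is still mapped to `a` by `φ`. -/
theorem scf_value_unchanged_by_resolvent {A V : Type*}
    (W : V → Set (A → A → Prop))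
    (hne : ∀ v : V, (W v).Nonempty)
    (hwo : ∀ v : V, ∀ R ∈ W v, IsWeakOrdering R)
    (φ : (∀ v : V, W v) → A) (hISP : ISP W φ)
    (v : V) (P : ∀ u : V, W u) (a : A) (ha : φ P = a)
    (Wv : A → A → Prop) (hWv : Wv ∈ W v)
    (hres : Resolves Wv (P v).1 a)
    (Q : ∀ u : V, W u) (hQv : (Q v).1 = Wv)
    (hQ : ∀ u : V, u ≠ v → Q u = P u) :
    φ Q = a := by
  by_contra hb
  set b := φ Q with hbdef
  have h1 : ¬ StrictPref (P v).1 b a := by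
    have := hISP P Q v (fun w hw => (hQ w hw).symm)
    rwa [ha] at this
  have h2 : ¬ StrictPref (Q v).1 a b := by
    have := hISP Q P v (fun w hw => hQ w hw)
    rwa [ha] at this
  have htot := (hwo v _ (P v).2).2.2
  have hpab : (P v).1 a b := by
    rcases htot a b with h | h
    · exact h
    · by_contra hab
      exact h1 ⟨h, hab⟩
  have : StrictPref Wv a b := hres b (fun h => hb h) hpab
  rw [hQv] at h2
  exact h2 this
end

section
/- Suppose the set of voters V is finite and for every voter v the feasible set W_v of weak orderings is complete. If the social choice function φ : ∏_{v∈V} W_v → A is individually strategy-proof, then φ satisfies the preference reversal property. -/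
/-- If `V` is finite and every voter's feasible set of weak
orderings is complete, then individual strategy-proofness implies the
preference reversal property. -/
theorem isp_implies_prefReversal_of_complete {A V : Type*} [Finite V]
    (W : V → Set (A → A → Prop))
    (hne : ∀ v : V, (W v).Nonempty)
    (hwo : ∀ v : V, ∀ R ∈ W v, IsWeakOrdering R)
    (hcomp : ∀ v : V, CompleteSet (W v))
    (φ : (∀ v : V, W v) → A) (hISP : ISP W φ) :
    PrefReversal W φ := by
  classical
  intro P Q hne'
  by_contra hPR
  push_neg at hPR
  set a := φ P with ha
  set b := φ Q with hb
  -- choose resolvents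
  have hres : ∀ v, ∃ R : W v, (P v = Q v → R = P v) ∧
      (P v ≠ Q v → IsResolvent R.1 a b (P v).1 (Q v).1) := by
    intro v
    by_cases h : P v = Q v
    · exact ⟨P v, fun _ => rfl, fun hc => absurd h hc⟩
    · have hnab : ¬ ((P v).1 a b ∧ (Q v).1 b a) := by
        rintro ⟨h1, h2⟩; exact h (hPR v h1 h2)
      obtain ⟨Wv, hWv, hr⟩ := hcomp v (P v).1 (P v).2 (Q v).1 (Q v).2 a b hne' hnab
      exact ⟨⟨Wv, hWv⟩, fun hc => absurd hc h, fun _ => hr⟩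
  choose R hReq hRres using hres
  have := Fintype.ofFinite V
  -- key induction
  have key : ∀ (B : ∀ v : V, W v) (Rp : ∀ v : V, W v),
      (∀ v, Rp v = B v ∨ Resolves (Rp v).1 (B v).1 (φ B)) →
      ∀ E : Finset V, φ (fun v => if v ∈ E then Rp v else B v) = φ B := by
    intro B Rp hRp E
    induction E using Finset.induction_on with
    | empty =>
      have hB : (fun v => if v ∈ (∅ : Finset V) then Rp v else B v) = B := by
        funext v; simp
      rw [hB]
    | @insert v E hvE ih =>
      set S : ∀ v : V, W v := fun w => if w ∈ E then Rp w else B w with hS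
      set S' : ∀ v : V, W v := fun w => if w ∈ insert v E then Rp w else B w with hS'
      have hagree : ∀ w, w ≠ v → S w = S' w := by
        intro w hw
        simp only [hS, hS', Finset.mem_insert]
        by_cases hwE : w ∈ E <;> simp [hwE, hw]
      have hSv : S v = B v := by simp [hS, hvE]
      have hS'v : S' v = Rp v := by simp [hS']
      rcases hRp v with hcase | hcase
      · have : S' = S := by
          funext w
          by_cases hw : w = v
          · subst hw; rw [hSv, hS'v, hcase]
          · exact (hagree w hw).symm
        rw [this, ih]
      · -- Resolves (Rp v).1 (B v).1 (φ B)
        by_contra hne2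
        have hc : φ S' ≠ φ B := hne2 ∘ id
        have h1 : ¬ StrictPref (S v).1 (φ S') (φ S) := hISP S S' v hagree
        have h2 : ¬ StrictPref (S' v).1 (φ S) (φ S') :=
          hISP S' S v (fun w hw => (hagree w hw).symm)
        rw [hSv, ih] at h1
        rw [hS'v, ih] at h2
        have htot := (hwo v (B v).1 (B v).2).2.2 (φ B) (φ S')
        rcases htot with h3 | h3
        · exact h2 (hcase (φ S') (Ne.symm hc ∘ Eq.symm) h3)
        · by_cases h4 : (B v).1 (φ B) (φ S')
          · exact h2 (hcase (φ S') (Ne.symm hc ∘ Eq.symm) h4)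
          · exact h1 ⟨h3, h4⟩
  have hP : φ (fun v => if v ∈ (Finset.univ : Finset V) then R v else P v) = a := by
    apply key
    intro v
    by_cases h : P v = Q v
    · exact Or.inl (hReq v h)
    · exact Or.inr (hRres v h).1
  have hQ : φ (fun v => if v ∈ (Finset.univ : Finset V) then R v else Q v) = b := by
    apply key
    intro v
    by_cases h : P v = Q v
    · exact Or.inl ((hReq v h).trans h)
    · exact Or.inr (hRres v h).2
  have : (fun v => if v ∈ (Finset.univ : Finset V) then R v else P v)
      = (fun v => if v ∈ (Finset.univ : Finset V) then R v else Q v) := by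
    funext v; simp
  rw [this, hQ] at hP
  exact hne' hP.symm
end

section
/- Suppose the set of voters V is finite and for every voter v the feasible set W_v of weak orderings is complete. Then for a social choice function φ : ∏_{v∈V} W_v → A the following are equivalent: (1) φ satisfies the preference reversal property; (2) φ satisfies the almost preference reversal property; (3) φ is group strategy-proof; (4) φ is individually strategy-proof. -/
/-- Key lemma: if `R` resolves the `P v`-indifference at the current outcome,
replacing voter `v`'s preference by `R` does not change the outcome. -/
lemma keep_outcome {A V : Type*} [DecidableEq V] {W : V → Set (A → A → Prop)}
    (hwo : ∀ v : V, ∀ R ∈ W v, IsWeakOrdering R)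
    {φ : (∀ v : V, W v) → A} (hisp : ISP W φ)
    (P : ∀ v : V, W v) (v : V) (R : W v)
    (hres : Resolves R.1 (P v).1 (φ P)) :
    φ (Function.update P v R) = φ P := by
  set Q := Function.update P v R with hQ
  have hoff : ∀ w : V, w ≠ v → P w = Q w := by
    intro w hw; simp [hQ, Function.update_of_ne hw]
  have h1 : ¬ StrictPref (P v).1 (φ Q) (φ P) := hisp P Q v hoff
  have h2 : ¬ StrictPref (Q v).1 (φ P) (φ Q) :=
    hisp Q P v (fun w hw => (hoff w hw).symm)
  have hQv : Q v = R := Function.update_self v R P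
  by_contra hne
  have htot := (hwo v (P v).1 (P v).2).2.2 (φ P) (φ Q)
  have had : (P v).1 (φ P) (φ Q) := by
    rcases htot with h | h
    · exact h
    · by_contra h'
      exact h1 ⟨h, h'⟩
  exact h2 (hQv ▸ hres (φ Q) hne had)


/-- If `V` is finite and every voter's feasible set of weak
orderings is complete, then preference reversal, almost preference reversal,
group strategy-proofness and individual strategy-proofness are equivalent. -/

theorem tfae_of_complete {A V : Type*} [Finite V]
    (W : V → Set (A → A → Prop))
    (hne : ∀ v : V, (W v).Nonempty)
    (hwo : ∀ v : V, ∀ R ∈ W v, IsWeakOrdering R)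
    (hcomp : ∀ v : V, CompleteSet (W v))
    (φ : (∀ v : V, W v) → A) :
    [PrefReversal W φ, AlmostPrefReversal W φ, GSP W φ, ISP W φ].TFAE := by
  classical
  cases nonempty_fintype V
  tfae_have 1 → 2 := by
    intro h P Q hne'
    obtain ⟨v, h1, h2, h3⟩ := h P Q hne'
    exact ⟨⟨v, h1, h3⟩, ⟨v, h2, h3⟩⟩
  tfae_have 2 → 3 := by
    intro h hgsp
    obtain ⟨D, P, Q, ⟨v0, hv0⟩, hoff, hman⟩ := hgsp
    have hne' : φ P ≠ φ Q := by
      intro he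
      exact (hman v0 hv0).2 (he ▸ (hwo v0 (P v0).1 (P v0).2).1 (φ P))
    obtain ⟨⟨v, hv1, hv2⟩, -⟩ := h P Q hne'
    have hvD : v ∈ D := by
      by_contra hvD
      exact hv2 (hoff v hvD)
    exact (hman v hvD).2 hv1
  tfae_have 3 → 4 := by
    intro h P Q v hoff hsp
    exact h ⟨{v}, P, Q, ⟨v, rfl⟩, fun w hw => hoff w hw, fun w hw => hw ▸ hsp⟩
  tfae_have 4 → 1 := by
    intro hisp P Q hne'
    by_contra hcon
    have hch : ∀ v : V, ∃ R : W v,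
        (P v = Q v ∧ R = P v) ∨
        (Resolves R.1 (P v).1 (φ P) ∧ Resolves R.1 (Q v).1 (φ Q)) := by
      intro v
      by_cases h : P v = Q v
      · exact ⟨P v, Or.inl ⟨h, rfl⟩⟩
      · have hnot : ¬ ((P v).1 (φ P) (φ Q) ∧ (Q v).1 (φ Q) (φ P)) := by
          rintro ⟨h1, h2⟩
          exact hcon ⟨v, h1, h2, h⟩
        obtain ⟨Wr, hWm, hr1, hr2⟩ :=
          hcomp v (P v).1 (P v).2 (Q v).1 (Q v).2 (φ P) (φ Q) hne' hnot
        exact ⟨⟨Wr, hWm⟩, Or.inr ⟨hr1, hr2⟩⟩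
    choose R hR using hch
    -- main inductive claims
    have main : ∀ (S : ∀ v : V, W v),
        (∀ v, Resolves (R v).1 (S v).1 (φ S) ∨ (P v = Q v ∧ R v = P v ∧ S v = P v)) →
        ∀ s : Finset V, φ (fun v => if v ∈ s then R v else S v) = φ S := by
      intro S hS s
      induction s using Finset.induction_on with
      | empty => simp
      | @insert a s ha ih =>
        set B : ∀ v : V, W v := fun v => if v ∈ s then R v else S v with hB
        have hBa : B a = S a := by simp [hB, ha]
        rcases hS a with hres | ⟨hpq, hRa, hSa⟩
        · have hres' : Resolves (R a).1 (B a).1 (φ B) := by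
            rw [hBa, ih]; exact hres
          have hupd : (fun v => if v ∈ insert a s then R v else S v)
              = Function.update B a (R a) := by
            funext v
            by_cases hv : v = a
            · subst hv; simp [Function.update_self]
            · simp [Function.update_of_ne hv, hB, Finset.mem_insert, hv]
          rw [hupd, keep_outcome hwo hisp B a (R a) hres', ih]
        · have : (fun v => if v ∈ insert a s then R v else S v)
              = fun v => if v ∈ s then R v else S v := by
            funext v
            by_cases hv : v = a
            · subst hv; simp [ha, hRa, hSa]
            · simp [Finset.mem_insert, hv]
          rw [this, ih]
    have hRfix : (fun v : V => if v ∈ (Finset.univ : Finset V) then R v else P v)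
        = fun v : V => if v ∈ (Finset.univ : Finset V) then R v else Q v := by
      funext v; simp
    have hP : φ (fun v : V => if v ∈ (Finset.univ : Finset V) then R v else P v) = φ P := by
      apply main
      intro v
      rcases hR v with ⟨hpq, hRv⟩ | ⟨hr1, hr2⟩
      · exact Or.inr ⟨hpq, hRv, rfl⟩
      · exact Or.inl hr1
    have hQ : φ (fun v : V => if v ∈ (Finset.univ : Finset V) then R v else Q v) = φ Q := by
      apply main
      intro v
      rcases hR v with ⟨hpq, hRv⟩ | ⟨hr1, hr2⟩
      · exact Or.inr ⟨hpq, hRv, hpq.symm⟩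
      · exact Or.inl hr2
    exact hne' (hP ▸ hRfix ▸ hQ)
  tfae_finish
end

section
/- Suppose the set of voters V is finite and every voter's feasible set is the set of all weak orderings on A (universal domain). If the social choice function φ is individually strategy-proof, then φ satisfies the preference reversal property (and hence is group strategy-proof). -/
section Aux

variable {A V : Type*}

/-- Ranking function: `a` on top, `b` second, everything else third. -/
private def rk (a b x : A) [DecidableEq A] : ℕ :=
  if x = a then 0 else if x = b then 1 else 2

/-- The weak ordering putting `a` on top, `b` second, everything else tied third. -/
def twoTop (a b : A) : A → A → Prop := by
  classical
  exact fun x y => rk a b x ≤ rk a b y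

lemma twoTop_def (a b x y : A) :
    twoTop a b x y ↔ (@rk A a b x (Classical.decEq A) ≤ @rk A a b y (Classical.decEq A)) := by
  simp [twoTop]

lemma twoTop_wo (a b : A) : IsWeakOrdering (twoTop a b) := by
  classical
  refine ⟨fun x => ?_, fun x y z h1 h2 => ?_, fun x y => ?_⟩
  · simp [twoTop]
  · simp only [twoTop] at *; omega
  · simp only [twoTop]; omega

lemma resolves_top (a b : A) (P : A → A → Prop) : Resolves (twoTop a b) P a := by
  classical
  intro x hx _
  constructor
  · simp [twoTop, rk]
  · simp only [twoTop, rk]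
    simp only [if_pos rfl, if_neg hx]
    split_ifs <;> simp

lemma resolves_second {a b : A} (hab : a ≠ b) (P : A → A → Prop) (h : ¬ P a b) :
    Resolves (twoTop b a) P a := by
  classical
  intro x hx hax
  have hxb : x ≠ b := by rintro rfl; exact h hax
  constructor
  · simp only [twoTop, rk]
    simp [if_neg hab, if_neg hxb, if_neg hx]
  · simp only [twoTop, rk]
    simp [if_neg hab, if_neg hxb, if_neg hx]

/-- Key lemma: replacing voter `v`'s preference by one resolving its indifference
at the current outcome does not change the outcome. -/
lemma keep [DecidableEq V]
    (φ : (∀ _ : V, ({R : A → A → Prop | IsWeakOrdering R} : Set (A → A → Prop))) → A)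
    (hISP : ISP (fun _ : V => {R : A → A → Prop | IsWeakOrdering R}) φ)
    (P : ∀ _ : V, ({R : A → A → Prop | IsWeakOrdering R} : Set (A → A → Prop)))
    (v : V) (W : ({R : A → A → Prop | IsWeakOrdering R} : Set (A → A → Prop)))
    (hres : Resolves W.1 (P v).1 (φ P)) :
    φ (Function.update P v W) = φ P := by
  set Q := Function.update P v W with hQ
  by_contra hne
  have hoff : ∀ w : V, w ≠ v → P w = Q w := fun w hw => (Function.update_of_ne hw _ _).symm
  have h1 := hISP P Q v hoff
  have h2 := hISP Q P v (fun w hw => (hoff w hw).symm)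
  obtain ⟨-, -, htot⟩ := (P v).2
  have hP : (P v).1 (φ P) (φ Q) := by
    rcases htot (φ P) (φ Q) with h | h
    · exact h
    · by_contra hc; exact h1 ⟨h, hc⟩
  have hstr : StrictPref W.1 (φ P) (φ Q) := hres (φ Q) hne hP
  have hQv : Q v = W := Function.update_self v W P
  exact h2 (by rw [hQv]; exact hstr)

/-- Merging in resolvents over a finite set of voters keeps the outcome. -/
lemma merge [DecidableEq V]
    (φ : (∀ _ : V, ({R : A → A → Prop | IsWeakOrdering R} : Set (A → A → Prop))) → A)
    (hISP : ISP (fun _ : V => {R : A → A → Prop | IsWeakOrdering R}) φ)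
    (W : V → ({R : A → A → Prop | IsWeakOrdering R} : Set (A → A → Prop)))
    (D : Finset V)
    (P : ∀ _ : V, ({R : A → A → Prop | IsWeakOrdering R} : Set (A → A → Prop)))
    (hyp : ∀ v ∈ D, Resolves (W v).1 (P v).1 (φ P)) :
    φ (fun v => if v ∈ D then W v else P v) = φ P := by
  induction D using Finset.induction_on with
  | empty => simp
  | @insert a s ha IH =>
    have hIH : φ (fun v => if v ∈ s then W v else P v) = φ P :=
      IH (fun v hv => hyp v (Finset.mem_insert_of_mem hv))
    set P' : ∀ _ : V, ({R : A → A → Prop | IsWeakOrdering R} : Set (A → A → Prop)) :=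
      fun v => if v ∈ s then W v else P v with hP'
    have heq : (fun v => if v ∈ insert a s then W v else P v) = Function.update P' a (W a) := by
      funext w
      by_cases hw : w = a
      · subst hw; simp [Function.update_self, P']
      · simp [Function.update_of_ne hw, P', Finset.mem_insert, hw]
    have hres : Resolves (W a).1 (P' a).1 (φ P') := by
      have : P' a = P a := by simp [P', ha]
      rw [this, hIH]
      exact hyp a (Finset.mem_insert_self a s)
    rw [heq, keep φ hISP P' a (W a) hres, hIH]

end Aux
/-- Under the universal domain hypothesis (every voter's feasible
set is the set of all weak orderings) and a finite set of voters, individual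
strategy-proofness implies the preference reversal property (and hence group
strategy-proofness). -/
theorem isp_implies_prefReversal_universal_domain {A V : Type*} [Finite V]
    (φ : (∀ _ : V, ({R : A → A → Prop | IsWeakOrdering R} :
        Set (A → A → Prop))) → A)
    (hISP : ISP (fun _ : V => {R : A → A → Prop | IsWeakOrdering R}) φ) :
    PrefReversal (fun _ : V => {R : A → A → Prop | IsWeakOrdering R}) φ ∧
    GSP (fun _ : V => {R : A → A → Prop | IsWeakOrdering R}) φ := by
  classical
  haveI := Fintype.ofFinite V
  have hPR : PrefReversal (fun _ : V => {R : A → A → Prop | IsWeakOrdering R}) φ := by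
    intro P Q hne
    by_contra hcon
    push_neg at hcon
    -- hcon : ∀ v, (P v).1 (φ P) (φ Q) → (Q v).1 (φ Q) (φ P) → P v = Q v
    have hW : ∀ v : V, ∃ W : ({R : A → A → Prop | IsWeakOrdering R} : Set (A → A → Prop)),
        P v ≠ Q v → Resolves W.1 (P v).1 (φ P) ∧ Resolves W.1 (Q v).1 (φ Q) := by
      intro v
      by_cases hv : P v = Q v
      · exact ⟨P v, fun h => absurd hv h⟩
      · have hnot : ¬ ((P v).1 (φ P) (φ Q) ∧ (Q v).1 (φ Q) (φ P)) :=
          fun ⟨h1, h2⟩ => hv (hcon v h1 h2)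
        by_cases hp : (P v).1 (φ P) (φ Q)
        · have hq : ¬ (Q v).1 (φ Q) (φ P) := fun h2 => hnot ⟨hp, h2⟩
          exact ⟨⟨twoTop (φ P) (φ Q), twoTop_wo _ _⟩, fun _ =>
            ⟨resolves_top _ _ _, resolves_second hne.symm _ hq⟩⟩
        · exact ⟨⟨twoTop (φ Q) (φ P), twoTop_wo _ _⟩, fun _ =>
            ⟨resolves_second hne _ hp, resolves_top _ _ _⟩⟩
    choose W hWr using hW
    set D : Finset V := Finset.univ.filter (fun v => P v ≠ Q v) with hD
    have hmemD : ∀ v, v ∈ D ↔ P v ≠ Q v := by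
      intro v; simp [hD]
    have key1 : φ (fun v => if v ∈ D then W v else P v) = φ P :=
      merge φ hISP W D P (fun v hv => (hWr v ((hmemD v).1 hv)).1)
    have key2 : φ (fun v => if v ∈ D then W v else Q v) = φ Q :=
      merge φ hISP W D Q (fun v hv => (hWr v ((hmemD v).1 hv)).2)
    have hprof : (fun v => if v ∈ D then W v else P v)
        = (fun v => if v ∈ D then W v else Q v) := by
      funext v
      by_cases hv : v ∈ D
      · simp [hv]
      · have : P v = Q v := by
          by_contra h; exact hv ((hmemD v).2 h)
        simp [hv, this]
    exact hne (key1 ▸ key2 ▸ hprof ▸ rfl)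
  refine ⟨hPR, ?_⟩
  rintro ⟨D, P, Q, ⟨v0, hv0⟩, hoff, hstrict⟩
  have hne : φ P ≠ φ Q := by
    intro h
    have hs := hstrict v0 hv0
    rw [h] at hs
    exact hs.2 hs.1
  obtain ⟨v, h1, h2, h3⟩ := hPR P Q hne
  have hvD : v ∈ D := by
    by_contra hv
    exact h3 (hoff v hv)
  exact (hstrict v hvD).2 h1
end

section
/- Suppose the set of voters V is infinite and the set of alternatives A is finite. Let φ be a group strategy-proof social choice function whose range has cardinality at most 3. Then φ satisfies the preference reversal property. -/
/-!
Take a counterexample `(P, Q)` with the fewest distinct (old, new) preference pairs among the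
voters who change; this number is finite because `A` is. Group strategy-proofness of the deviation
`Q → P` yields a changing voter `v₀` with `φ Q ≻ φ P` under `T := P v₀`. Let `C` be the voters
with the same (old, new) pair as `v₀`, let `R` be `P` with `C` switched to `Q`, and `H` be `Q` with
`C` switched back to `P`. If `φ R = φ P` or `φ H = φ Q`, then `(R, Q)` resp. `(P, H)` is a smaller
counterexample. Otherwise the deviations `P → R` and `H → Q` are made by `C` alone, whose members
all hold `T`, so group strategy-proofness gives `φ P ≿_T φ R` and `φ H ≿_T φ Q`. As `φ` takes at
most three values, `φ R = φ Q`, `φ H = φ P` or `φ R = φ H`, and each case gives `φ P ≿_T φ Q`.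
-/

lemma eq_or_eq_or_eq_of_three_values {α : Type*} {x y z a b c d : α}
    (ha : a = x ∨ a = y ∨ a = z) (hb : b = x ∨ b = y ∨ b = z)
    (hc : c = x ∨ c = y ∨ c = z) (hd : d = x ∨ d = y ∨ d = z)
    (hab : a ≠ b) (hca : c ≠ a) (hdb : d ≠ b) :
    c = b ∨ d = a ∨ c = d := by
  rcases ha with rfl | rfl | rfl <;> rcases hb with rfl | rfl | rfl <;>
    rcases hc with rfl | rfl | rfl <;> rcases hd with rfl | rfl | rfl <;> simp_all

section

variable {A V : Type*} {W : V → Set (A → A → Prop)} {φ : (∀ v : V, W v) → A}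

def HasReversal (φ : (∀ v : V, W v) → A) (P Q : ∀ v : V, W v) : Prop :=
  ∃ v : V, (P v).1 (φ P) (φ Q) ∧ (Q v).1 (φ Q) (φ P) ∧ P v ≠ Q v

def changedPrefPairs (P Q : ∀ v : V, W v) : Set ((A → A → Prop) × (A → A → Prop)) :=
  (fun v => ((P v).1, (Q v).1)) '' {v | P v ≠ Q v}

lemma GSP.exists_ne_pref (hGSP : GSP W φ) (hwo : ∀ v : V, ∀ R ∈ W v, IsWeakOrdering R)
    {P Q : ∀ v : V, W v} (h : φ P ≠ φ Q) : ∃ v, P v ≠ Q v ∧ (P v).1 (φ P) (φ Q) := by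
  by_contra! hnot
  have hD : {v | P v ≠ Q v}.Nonempty := by
    by_contra! hD
    exact h (congrArg φ (funext fun v => not_not.mp (Set.eq_empty_iff_forall_notMem.mp hD v)))
  refine hGSP ⟨{v | P v ≠ Q v}, P, Q, hD, fun v hv => not_not.mp hv, fun v hv => ?_⟩
  exact ⟨((hwo v _ (P v).2).2.2 _ _).resolve_left (hnot v hv), hnot v hv⟩

lemma GSP.pref_of_common_pref (hGSP : GSP W φ) (hwo : ∀ v : V, ∀ R ∈ W v, IsWeakOrdering R)
    {X Y : ∀ v : V, W v} {T : A → A → Prop} (hT : ∀ v, X v ≠ Y v → (X v).1 = T)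
    (h : φ X ≠ φ Y) : T (φ X) (φ Y) := by
  obtain ⟨v, hv, hpref⟩ := hGSP.exists_ne_pref hwo h
  exact hT v hv ▸ hpref

lemma GSP.exists_strictPref_of_not_hasReversal (hGSP : GSP W φ)
    (hwo : ∀ v : V, ∀ R ∈ W v, IsWeakOrdering R) {P Q : ∀ v : V, W v} (h : φ P ≠ φ Q)
    (hnr : ¬ HasReversal φ P Q) : ∃ v, P v ≠ Q v ∧ StrictPref (P v).1 (φ Q) (φ P) := by
  obtain ⟨v, hv, hQ⟩ := hGSP.exists_ne_pref hwo h.symm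
  have hP : ¬ (P v).1 (φ P) (φ Q) := fun hP => hnr ⟨v, hP, hQ, hv.symm⟩
  exact ⟨v, hv.symm, ((hwo v _ (P v).2).2.2 _ _).resolve_left hP, hP⟩

lemma HasReversal.of_agree_on_changes {P Q X Y : ∀ v : V, W v} (hXY : HasReversal φ X Y)
    (hX : φ X = φ P) (hY : φ Y = φ Q)
    (hagree : ∀ v, X v ≠ Y v → X v = P v ∧ Y v = Q v) :
    HasReversal φ P Q := by
  obtain ⟨v, hXv, hYv, hne⟩ := hXY
  obtain ⟨hPv, hQv⟩ := hagree v hne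
  exact ⟨v, hPv ▸ hX ▸ hY ▸ hXv, hQv ▸ hX ▸ hY ▸ hYv, hPv ▸ hQv ▸ hne⟩

lemma ncard_changedPrefPairs_lt [Finite A] {P Q X Y : ∀ v : V, W v} {t}
    (ht : t ∈ changedPrefPairs P Q) (hagree : ∀ v, X v ≠ Y v → X v = P v ∧ Y v = Q v)
    (hnt : ∀ v, X v ≠ Y v → ((P v).1, (Q v).1) ≠ t) :
    (changedPrefPairs X Y).ncard < (changedPrefPairs P Q).ncard := by
  have hsub : changedPrefPairs X Y ⊆ changedPrefPairs P Q \ {t} := by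
    rintro _ ⟨v, hv, rfl⟩
    obtain ⟨hPv, hQv⟩ := hagree v hv
    have hne : P v ≠ Q v := by rwa [← hPv, ← hQv]
    simp only [hPv, hQv]
    exact ⟨⟨v, hne, rfl⟩, hnt v hv⟩
  exact (Set.ncard_le_ncard hsub).trans_lt (Set.ncard_sdiff_singleton_lt_of_mem ht)

lemma GSP.pref_of_coalition_switch (hGSP : GSP W φ)
    (hwo : ∀ v : V, ∀ R ∈ W v, IsWeakOrdering R)
    (hrange : ∃ x y z : A, ∀ P : ∀ v : V, W v, φ P = x ∨ φ P = y ∨ φ P = z)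
    {P Q : ∀ v : V, W v} {C : Set V} [DecidablePred (· ∈ C)] {T : A → A → Prop}
    (hT : IsWeakOrdering T) (hC : ∀ v ∈ C, (P v).1 = T) (h : φ P ≠ φ Q)
    (hRP : φ (C.piecewise Q P) ≠ φ P) (hHQ : φ (C.piecewise P Q) ≠ φ Q) :
    T (φ P) (φ Q) := by
  set R := C.piecewise Q P
  set H := C.piecewise P Q
  have hPR : T (φ P) (φ R) := by
    refine hGSP.pref_of_common_pref hwo (fun v hv => hC v ?_) hRP.symm
    by_contra hvC
    exact hv (Set.piecewise_eq_of_notMem _ _ _ hvC).symm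
  have hHQ' : T (φ H) (φ Q) := by
    refine hGSP.pref_of_common_pref hwo (fun v hv => ?_) hHQ
    have hvC : v ∈ C := by
      by_contra hvC
      exact hv (Set.piecewise_eq_of_notMem _ _ _ hvC)
    have hHv : H v = P v := Set.piecewise_eq_of_mem _ _ _ hvC
    rw [hHv, hC v hvC]
  obtain ⟨x, y, z, hxyz⟩ := hrange
  rcases eq_or_eq_or_eq_of_three_values (hxyz P) (hxyz Q) (hxyz R) (hxyz H) h hRP hHQ with
    hRQ | hHP | hRH
  · exact hRQ ▸ hPR
  · exact hHP ▸ hHQ'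
  · exact hT.2.1 hPR (hRH ▸ hHQ')

lemma exists_smaller_counterexample [Finite A] (hGSP : GSP W φ)
    (hwo : ∀ v : V, ∀ R ∈ W v, IsWeakOrdering R)
    (hrange : ∃ x y z : A, ∀ P : ∀ v : V, W v, φ P = x ∨ φ P = y ∨ φ P = z)
    {P Q : ∀ v : V, W v} (h : φ P ≠ φ Q) (hnr : ¬ HasReversal φ P Q) :
    ∃ P' Q' : ∀ v : V, W v, φ P' ≠ φ Q' ∧ ¬ HasReversal φ P' Q' ∧
      (changedPrefPairs P' Q').ncard < (changedPrefPairs P Q).ncard := by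
  classical
  obtain ⟨v₀, hv₀, hstrict⟩ := hGSP.exists_strictPref_of_not_hasReversal hwo h hnr
  set t := ((P v₀).1, (Q v₀).1)
  have ht : t ∈ changedPrefPairs P Q := ⟨v₀, hv₀, rfl⟩
  set C := {v | P v ≠ Q v ∧ ((P v).1, (Q v).1) = t}
  have hCpref : ∀ v ∈ C, (P v).1 = (P v₀).1 := fun v hv => (Prod.ext_iff.mp hv.2).1
  set R := C.piecewise Q P
  set H := C.piecewise P Q
  have hR : ∀ v, R v ≠ Q v → R v = P v ∧ ((P v).1, (Q v).1) ≠ t := by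
    intro v hv
    have hvC : v ∉ C := fun hvC => hv (Set.piecewise_eq_of_mem _ _ _ hvC)
    have hRv : R v = P v := Set.piecewise_eq_of_notMem _ _ _ hvC
    exact ⟨hRv, fun heq => hvC ⟨hRv ▸ hv, heq⟩⟩
  have hH : ∀ v, P v ≠ H v → H v = Q v ∧ ((P v).1, (Q v).1) ≠ t := by
    intro v hv
    have hvC : v ∉ C := fun hvC => hv (Set.piecewise_eq_of_mem _ _ _ hvC).symm
    have hHv : H v = Q v := Set.piecewise_eq_of_notMem _ _ _ hvC
    exact ⟨hHv, fun heq => hvC ⟨hHv ▸ hv, heq⟩⟩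
  by_cases hRP : φ R = φ P
  · have hagree v (hv : R v ≠ Q v) : R v = P v ∧ Q v = Q v := ⟨(hR v hv).1, rfl⟩
    exact ⟨R, Q, hRP ▸ h, fun hRQ => hnr (hRQ.of_agree_on_changes hRP rfl hagree),
      ncard_changedPrefPairs_lt ht hagree fun v hv => (hR v hv).2⟩
  by_cases hHQ : φ H = φ Q
  · have hagree v (hv : P v ≠ H v) : P v = P v ∧ H v = Q v := ⟨rfl, (hH v hv).1⟩
    exact ⟨P, H, hHQ ▸ h, fun hPH => hnr (hPH.of_agree_on_changes rfl hHQ hagree),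
      ncard_changedPrefPairs_lt ht hagree fun v hv => (hH v hv).2⟩
  exact (hstrict.2 <|
    hGSP.pref_of_coalition_switch hwo hrange (hwo v₀ _ (P v₀).2) hCpref h hRP hHQ).elim

lemma hasReversal_of_ne [Finite A] (hGSP : GSP W φ)
    (hwo : ∀ v : V, ∀ R ∈ W v, IsWeakOrdering R)
    (hrange : ∃ x y z : A, ∀ P : ∀ v : V, W v, φ P = x ∨ φ P = y ∨ φ P = z)
    {P Q : ∀ v : V, W v} (h : φ P ≠ φ Q) : HasReversal φ P Q := by
  induction hn : (changedPrefPairs P Q).ncard using Nat.strong_induction_on generalizing P Q with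
  | _ n ih =>
    by_contra hnr
    obtain ⟨P', Q', h', hnr', hlt⟩ := exists_smaller_counterexample hGSP hwo hrange h hnr
    exact hnr' (ih _ (hn ▸ hlt) h' rfl)

end

theorem gsp_implies_prefReversal_infinite_voters_range_le_three_general
    {A V : Type*} [Finite A]
    (W : V → Set (A → A → Prop))
    (hwo : ∀ v : V, ∀ R ∈ W v, IsWeakOrdering R)
    (φ : (∀ v : V, W v) → A)
    (hrange : ∃ x y z : A, ∀ P : ∀ v : V, W v, φ P = x ∨ φ P = y ∨ φ P = z)
    (hGSP : GSP W φ) :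
    PrefReversal W φ :=
  fun _ _ => hasReversal_of_ne hGSP hwo hrange

/-- If `V` is infinite, `A` is finite, `φ` is group strategy-proof
and the range of `φ` has cardinality at most 3, then `φ` satisfies the
preference reversal property. -/
theorem gsp_implies_prefReversal_infinite_voters_range_le_three
    {A V : Type*} [Infinite V] [Finite A]
    (W : V → Set (A → A → Prop))
    (hne : ∀ v : V, (W v).Nonempty)
    (hwo : ∀ v : V, ∀ R ∈ W v, IsWeakOrdering R)
    (φ : (∀ v : V, W v) → A)
    (hrange : ∃ x y z : A, ∀ P : ∀ v : V, W v, φ P = x ∨ φ P = y ∨ φ P = z)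
    (hGSP : GSP W φ) :
    PrefReversal W φ :=
  gsp_implies_prefReversal_infinite_voters_range_le_three_general W hwo φ hrange hGSP
end

section
/- Suppose the set of voters V is infinite, the set of alternatives A is finite, and every voter has the same complete feasible set O of weak orderings (W_v = O for all v ∈ V). Let φ be a group strategy-proof social choice function. Then φ satisfies the preference reversal property. -/
open scoped Classical

/-- The profile equal to `W` on `s` and to `P` off `s`. -/
noncomputable def pwProf {V α : Type*} (W P : V → α) (s : Set V) : V → α :=
  fun v => if v ∈ s then W v else P v

lemma pwProf_of_mem {V α : Type*} (W P : V → α) {s : Set V} {v : V} (h : v ∈ s) :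
    pwProf W P s v = W v := if_pos h

lemma pwProf_of_not_mem {V α : Type*} (W P : V → α) {s : Set V} {v : V} (h : v ∉ s) :
    pwProf W P s v = P v := if_neg h

/-- Voters of `D` for whom `a` is not weakly above any element of `X`. -/
def auxS {A V : Type*} {O : Set (A → A → Prop)}
    (P : ∀ _ : V, (O : Set (A → A → Prop))) (D : Set V) (a : A) (X : Set A) : Set V :=
  {v | v ∈ D ∧ ∀ x ∈ X, ¬ (P v).1 a x}

/-- Key lemma: if each `W v`, `v ∈ D`, resolves the `(P v)`-indifference at `φ P`,
then replacing the preferences of the whole coalition `D` by the `W v` does not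
change the outcome. -/
lemma aux_pwProf_eq {A V : Type*} [Finite A]
    {O : Set (A → A → Prop)} (hwo : ∀ R ∈ O, IsWeakOrdering R)
    (φ : (∀ _ : V, (O : Set (A → A → Prop))) → A)
    (hGSP : GSP (fun _ : V => O) φ)
    (P W : ∀ _ : V, (O : Set (A → A → Prop))) (D : Set V)
    (hW : ∀ v ∈ D, Resolves (W v).1 (P v).1 (φ P)) :
    φ (pwProf W P D) = φ P := by
  have extract : ∀ X : Set A, φ (pwProf W P (auxS P D (φ P) X)) ≠ φ P →
      ∃ v, v ∈ auxS P D (φ P) X ∧ (P v).1 (φ P) (φ (pwProf W P (auxS P D (φ P) X))) := by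
    intro X hc
    have hSne : (auxS P D (φ P) X).Nonempty := by
      rw [Set.nonempty_iff_ne_empty]
      intro h
      apply hc
      have hT : pwProf W P (auxS P D (φ P) X) = P := by
        funext v
        exact pwProf_of_not_mem W P (by simp [h])
      rw [hT]
    have h1 : ¬ ∀ v ∈ auxS P D (φ P) X,
        StrictPref (P v).1 (φ (pwProf W P (auxS P D (φ P) X))) (φ P) := by
      intro h
      exact hGSP ⟨auxS P D (φ P) X, P, pwProf W P (auxS P D (φ P) X), hSne,
        fun v hv => (pwProf_of_not_mem W P hv).symm, h⟩
    push_neg at h1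
    obtain ⟨v, hv, hns⟩ := h1
    obtain ⟨-, -, htot⟩ := hwo (P v).1 (P v).2
    refine ⟨v, hv, ?_⟩
    rcases htot (φ P) (φ (pwProf W P (auxS P D (φ P) X))) with h | h
    · exact h
    · by_contra hn
      exact hns ⟨h, hn⟩
  have main : ∀ n : ℕ, ∀ X : Set A, Xᶜ.ncard ≤ n →
      φ (pwProf W P (auxS P D (φ P) X)) = φ P := by
    intro n
    induction n with
    | zero =>
      intro X hX
      by_contra hc
      obtain ⟨v, hv, hPac⟩ := extract X hc
      have hXuniv : X = Set.univ := by
        have h0 : Xᶜ = ∅ := (Set.ncard_eq_zero (Set.toFinite _)).mp (Nat.le_zero.mp hX)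
        simpa [Set.compl_empty_iff] using h0
      exact hv.2 _ (hXuniv ▸ Set.mem_univ _) hPac
    | succ n ih =>
      intro X hX
      by_contra hc
      obtain ⟨v₀, hv₀, hPac⟩ := extract X hc
      have hcX : φ (pwProf W P (auxS P D (φ P) X)) ∉ X := fun hmem => hv₀.2 _ hmem hPac
      set c := φ (pwProf W P (auxS P D (φ P) X)) with hcdef
      have hcard : ((insert c X)ᶜ).ncard ≤ n := by
        have h1 : (Xᶜ \ {c}).ncard < Xᶜ.ncard :=
          Set.ncard_diff_singleton_lt_of_mem hcX (Set.toFinite _)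
        have h2 : (insert c X)ᶜ = Xᶜ \ {c} := by
          ext x; simp [Set.mem_insert_iff, and_comm]
        rw [h2]
        omega
      have hIH := ih (insert c X) hcard
      apply hGSP
      refine ⟨{v | v ∈ auxS P D (φ P) X ∧ (P v).1 (φ P) c},
        pwProf W P (auxS P D (φ P) X),
        pwProf W P (auxS P D (φ P) (insert c X)),
        ⟨v₀, hv₀, hPac⟩, ?_, ?_⟩
      · intro v hv
        simp only [Set.mem_setOf_eq, not_and] at hv
        by_cases hvS : v ∈ auxS P D (φ P) X
        · have hnp : ¬ (P v).1 (φ P) c := hv hvS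
          have hv' : v ∈ auxS P D (φ P) (insert c X) := by
            refine ⟨hvS.1, ?_⟩
            intro x hx
            rcases Set.mem_insert_iff.mp hx with rfl | hx
            · exact hnp
            · exact hvS.2 x hx
          rw [pwProf_of_mem W P hvS, pwProf_of_mem W P hv']
        · have hv' : v ∉ auxS P D (φ P) (insert c X) := by
            intro h
            exact hvS ⟨h.1, fun x hx => h.2 x (Set.mem_insert_of_mem _ hx)⟩
          rw [pwProf_of_not_mem W P hvS, pwProf_of_not_mem W P hv']
      · intro v hv
        obtain ⟨hvS, hvp⟩ := hv
        rw [pwProf_of_mem W P hvS, hIH]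
        exact hW v hvS.1 c hc hvp
  have h0 := main ((∅ : Set A)ᶜ).ncard ∅ le_rfl
  have hDS : auxS P D (φ P) (∅ : Set A) = D := by
    ext v; simp [auxS]
  rw [hDS] at h0
  exact h0

/-- If `V` is infinite, `A` is finite, every voter has the same
complete feasible set `O` of weak orderings, and `φ` is group strategy-proof,
then `φ` satisfies the preference reversal property. -/
theorem gsp_implies_prefReversal_infinite_voters_complete
    {A V : Type*} [Infinite V] [Finite A]
    (O : Set (A → A → Prop))
    (hne : O.Nonempty)
    (hwo : ∀ R ∈ O, IsWeakOrdering R)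
    (hcomp : CompleteSet O)
    (φ : (∀ _ : V, (O : Set (A → A → Prop))) → A)
    (hGSP : GSP (fun _ : V => O) φ) :
    PrefReversal (fun _ : V => O) φ := by
  intro P Q hPQ
  by_contra hcon
  push_neg at hcon
  have hab : φ P ≠ φ Q := hPQ
  have hres : ∀ v : V, ∃ Wv : (O : Set (A → A → Prop)),
      (P v ≠ Q v) → IsResolvent Wv.1 (φ P) (φ Q) (P v).1 (Q v).1 := by
    intro v
    by_cases h : P v = Q v
    · exact ⟨P v, fun h' => absurd h h'⟩
    · have hnot : ¬ ((P v).1 (φ P) (φ Q) ∧ (Q v).1 (φ Q) (φ P)) := by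
        rintro ⟨h1, h2⟩
        exact h (hcon v h1 h2)
      obtain ⟨Wv, hWO, hWres⟩ := hcomp (P v).1 (P v).2 (Q v).1 (Q v).2 (φ P) (φ Q) hab hnot
      exact ⟨⟨Wv, hWO⟩, fun _ => hWres⟩
  choose W hW using hres
  have h1 : φ (pwProf W P {v | P v ≠ Q v}) = φ P :=
    aux_pwProf_eq hwo φ hGSP P W {v | P v ≠ Q v} (fun v hv => (hW v hv).1)
  have h2 : φ (pwProf W Q {v | P v ≠ Q v}) = φ Q :=
    aux_pwProf_eq hwo φ hGSP Q W {v | P v ≠ Q v} (fun v hv => (hW v hv).2)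
  have heq : pwProf W P {v | P v ≠ Q v} = pwProf W Q {v | P v ≠ Q v} := by
    funext v
    by_cases h : v ∈ {v | P v ≠ Q v}
    · rw [pwProf_of_mem W P h, pwProf_of_mem W Q h]
    · rw [pwProf_of_not_mem W P h, pwProf_of_not_mem W Q h]
      exact not_not.mp h
  apply hab
  rw [← h1, ← h2, heq]
end
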